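/- Let Ω ⊂ ℝ^N be a bounded open set with smooth boundary, and let u ∈ C²(Ω̄) be complex-valued with u = 0 on ∂Ω, and let φ ∈ C²(Ω̄), σ ∈ C¹(Ω̄) be real-valued, s ∈ ℝ. Then Re ∫_Ω 2sσ² (∇φ·∇u) Δū dx = ∫_{∂Ω} sσ² (∂φ/∂ν) |∂u/∂ν|² dS − Re ∫_Ω 2s(∇σ²·∇ū)(∇φ·∇u) dx + ∫_Ω s(∇σ²·∇φ)|∇u|² dx + ∫_Ω sσ² Δφ |∇u|² dx − Re ∫_Ω 2sσ² Σ_{i,j} ∂_j∂_iφ ∂_iu ∂_jū dx. -/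

import Mathlib

/-!
Write `u = v + i w`. The real part of each integrand is sesquilinear in the derivatives of `u`,
hence the sum of the same expression for `v` and for `w`, so it suffices to treat a real `v`. For real `v` the identity is the divergence theorem for the field
`F = 2 b (∇φ·∇v) ∇v - b |∇v|² ∇φ` (with `b = σ²`): in `div F` the two terms `2 b D²v(∇φ, ∇v)`
cancel by the symmetry of `D²v`, leaving `2 b (∇φ·∇v) Δv` and the three lower-order integrands.
On the boundary `v = 0`, so `∇v = (∂_ν v) ν` and `ν·F = b (∂_ν φ) (∂_ν v)²`. As `∂Ω` is only known
through the divergence theorem, this vanishing of the tangential gradient is derived from it too,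
by testing `ν_j ∂_k v - ν_k ∂_j v` against smooth functions.
-/

open MeasureTheory

/-- Partial derivative of a complex-valued function on `ℝ^N` in the `i`-th coordinate. -/
noncomputable def pdC (N : ℕ) (f : EuclideanSpace ℝ (Fin N) → ℂ) (i : Fin N)
    (x : EuclideanSpace ℝ (Fin N)) : ℂ :=
  fderiv ℝ f x (EuclideanSpace.single i 1)

/-- Partial derivative of a real-valued function on `ℝ^N` in the `i`-th coordinate. -/
noncomputable def pdR (N : ℕ) (f : EuclideanSpace ℝ (Fin N) → ℝ) (i : Fin N)
    (x : EuclideanSpace ℝ (Fin N)) : ℝ :=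
  fderiv ℝ f x (EuclideanSpace.single i 1)

/-- `∇φ · ∇u` for real `φ` and complex `u`. -/
noncomputable def gradDotC (N : ℕ) (φ : EuclideanSpace ℝ (Fin N) → ℝ)
    (u : EuclideanSpace ℝ (Fin N) → ℂ) (x : EuclideanSpace ℝ (Fin N)) : ℂ :=
  ∑ i : Fin N, (pdR N φ i x : ℂ) * pdC N u i x

/-- Laplacian of a complex-valued function. -/
noncomputable def lapC (N : ℕ) (u : EuclideanSpace ℝ (Fin N) → ℂ)
    (x : EuclideanSpace ℝ (Fin N)) : ℂ :=
  ∑ i : Fin N, pdC N (pdC N u i) i x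

/-- Laplacian of a real-valued function. -/
noncomputable def lapR (N : ℕ) (φ : EuclideanSpace ℝ (Fin N) → ℝ)
    (x : EuclideanSpace ℝ (Fin N)) : ℝ :=
  ∑ i : Fin N, pdR N (pdR N φ i) i x

/-- `|∇u|²` for a complex-valued function `u`. -/
noncomputable def gradNormSqC (N : ℕ) (u : EuclideanSpace ℝ (Fin N) → ℂ)
    (x : EuclideanSpace ℝ (Fin N)) : ℝ :=
  ∑ i : Fin N, ‖pdC N u i x‖ ^ 2

open Finset

variable {N : ℕ}

theorem Continuous.integrableOn_of_isBounded {X F : Type*} [MeasurableSpace X]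
    [PseudoMetricSpace X] [ProperSpace X] [OpensMeasurableSpace X] [T2Space X]
    [NormedAddCommGroup F] {μ : Measure X} [IsFiniteMeasureOnCompacts μ] {f : X → F}
    (hf : Continuous f) {s : Set X} (hs : Bornology.IsBounded s) : IntegrableOn f s μ :=
  (hf.continuousOn.integrableOn_compact hs.isCompact_closure).mono_set subset_closure

section PartialDerivatives

variable {f g : EuclideanSpace ℝ (Fin N) → ℝ} {x : EuclideanSpace ℝ (Fin N)}

theorem contDiff_pdR {m n : WithTop ℕ∞} (hf : ContDiff ℝ n f) (hmn : m + 1 ≤ n) (i : Fin N) :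
    ContDiff ℝ m (pdR N f i) :=
  show ContDiff ℝ m (ContinuousLinearMap.apply ℝ ℝ (EuclideanSpace.single i 1) ∘ fderiv ℝ f) from
    (ContinuousLinearMap.apply ℝ ℝ _).contDiff.comp (hf.fderiv_right hmn)

theorem contDiff_pdC {u : EuclideanSpace ℝ (Fin N) → ℂ} {m n : WithTop ℕ∞} (hu : ContDiff ℝ n u)
    (hmn : m + 1 ≤ n) (i : Fin N) : ContDiff ℝ m (pdC N u i) :=
  show ContDiff ℝ m (ContinuousLinearMap.apply ℝ ℂ (EuclideanSpace.single i 1) ∘ fderiv ℝ u) from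
    (ContinuousLinearMap.apply ℝ ℂ _).contDiff.comp (hu.fderiv_right hmn)

theorem pdR_add (hf : DifferentiableAt ℝ f x) (hg : DifferentiableAt ℝ g x) (i : Fin N) :
    pdR N (fun y => f y + g y) i x = pdR N f i x + pdR N g i x := by
  simp [pdR, fderiv_fun_add hf hg]

theorem pdR_sub (hf : DifferentiableAt ℝ f x) (hg : DifferentiableAt ℝ g x) (i : Fin N) :
    pdR N (fun y => f y - g y) i x = pdR N f i x - pdR N g i x := by
  simp [pdR, fderiv_fun_sub hf hg]

theorem pdR_mul (hf : DifferentiableAt ℝ f x) (hg : DifferentiableAt ℝ g x) (i : Fin N) :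
    pdR N (fun y => f y * g y) i x = pdR N f i x * g x + f x * pdR N g i x := by
  simp [pdR, fderiv_fun_mul hf hg]
  ring

theorem pdR_const_mul (hf : DifferentiableAt ℝ f x) (c : ℝ) (i : Fin N) :
    pdR N (fun y => c * f y) i x = c * pdR N f i x := by
  simp [pdR, fderiv_const_mul hf c]

theorem pdR_sum {ι : Type*} (s : Finset ι) {F : ι → EuclideanSpace ℝ (Fin N) → ℝ}
    (hF : ∀ k ∈ s, DifferentiableAt ℝ (F k) x) (i : Fin N) :
    pdR N (fun y => ∑ k ∈ s, F k y) i x = ∑ k ∈ s, pdR N (F k) i x := by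
  simp [pdR, fderiv_fun_sum hF]

theorem pdR_coord (i : Fin N) : pdR N (fun y => y i) i x = 1 := by
  simp only [pdR, ContinuousLinearMap.fderiv,
    show (fun y : EuclideanSpace ℝ (Fin N) => y i) = EuclideanSpace.proj i from rfl]
  simp

theorem pdR_pdR_comm (hf : ContDiff ℝ 2 f) (i j : Fin N) :
    pdR N (pdR N f i) j x = pdR N (pdR N f j) i x := by
  have hd : DifferentiableAt ℝ (fderiv ℝ f) x :=
    (hf.fderiv_right (m := 1) (by norm_num)).differentiable one_ne_zero x
  have hsecond : ∀ k l : Fin N, pdR N (pdR N f k) l x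
      = fderiv ℝ (fderiv ℝ f) x (EuclideanSpace.single l 1) (EuclideanSpace.single k 1) := by
    intro k l
    exact congrArg (· (EuclideanSpace.single l 1))
      ((ContinuousLinearMap.apply ℝ ℝ (EuclideanSpace.single k 1)).hasFDerivAt.comp x
        hd.hasFDerivAt).fderiv
  rw [hsecond, hsecond]
  exact (hf.contDiffAt.isSymmSndFDerivAt (by simp)) _ _

theorem re_pdC {u : EuclideanSpace ℝ (Fin N) → ℂ} (hu : DifferentiableAt ℝ u x) (i : Fin N) :
    (pdC N u i x).re = pdR N (fun y => (u y).re) i x :=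
  (congrArg (· (EuclideanSpace.single i 1))
    (Complex.reCLM.hasFDerivAt.comp x hu.hasFDerivAt).fderiv).symm

theorem im_pdC {u : EuclideanSpace ℝ (Fin N) → ℂ} (hu : DifferentiableAt ℝ u x) (i : Fin N) :
    (pdC N u i x).im = pdR N (fun y => (u y).im) i x :=
  (congrArg (· (EuclideanSpace.single i 1))
    (Complex.imCLM.hasFDerivAt.comp x hu.hasFDerivAt).fderiv).symm

end PartialDerivatives

section VectorCalculus

noncomputable def gradDotR (N : ℕ) (f g : EuclideanSpace ℝ (Fin N) → ℝ)
    (x : EuclideanSpace ℝ (Fin N)) : ℝ :=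
  ∑ i : Fin N, pdR N f i x * pdR N g i x

/-- The Hessian of `f` evaluated on `(∇g, ∇h)`. -/
noncomputable def hessR (N : ℕ) (f g h : EuclideanSpace ℝ (Fin N) → ℝ)
    (x : EuclideanSpace ℝ (Fin N)) : ℝ :=
  ∑ i : Fin N, ∑ j : Fin N, pdR N (pdR N f i) j x * pdR N g i x * pdR N h j x

noncomputable def divR (N : ℕ) (F : EuclideanSpace ℝ (Fin N) → Fin N → ℝ)
    (x : EuclideanSpace ℝ (Fin N)) : ℝ :=
  ∑ i : Fin N, pdR N (fun y => F y i) i x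

variable {f g h : EuclideanSpace ℝ (Fin N) → ℝ} {x : EuclideanSpace ℝ (Fin N)}

theorem gradDotR_const_mul (hf : DifferentiableAt ℝ f x) (c : ℝ) :
    gradDotR N (fun y => c * f y) g x = c * gradDotR N f g x := by
  simp only [gradDotR, pdR_const_mul hf, mul_sum, mul_assoc]

theorem gradDotR_mul (hf : DifferentiableAt ℝ f x) (hg : DifferentiableAt ℝ g x) :
    gradDotR N (fun y => f y * g y) h x = g x * gradDotR N f h x + f x * gradDotR N g h x := by
  simp only [gradDotR, pdR_mul hf hg, mul_sum, ← sum_add_distrib]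
  exact sum_congr rfl fun _ _ => by ring

theorem pdR_gradDotR (hf : ∀ i, DifferentiableAt ℝ (pdR N f i) x)
    (hg : ∀ i, DifferentiableAt ℝ (pdR N g i) x) (j : Fin N) :
    pdR N (gradDotR N f g) j x
      = ∑ i : Fin N,
          (pdR N (pdR N f i) j x * pdR N g i x + pdR N f i x * pdR N (pdR N g i) j x) := by
  rw [show gradDotR N f g = fun y => ∑ i : Fin N, pdR N f i y * pdR N g i y from rfl,
    pdR_sum (F := fun i y => pdR N f i y * pdR N g i y) _ (fun i _ => (hf i).mul (hg i))]
  exact sum_congr rfl fun i _ => pdR_mul (hf i) (hg i) j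

theorem gradDotR_gradDotR (hf : ∀ i, DifferentiableAt ℝ (pdR N f i) x)
    (hg : ∀ i, DifferentiableAt ℝ (pdR N g i) x) :
    gradDotR N (gradDotR N f g) h x = hessR N f g h x + hessR N g f h x := by
  simp only [gradDotR, hessR, pdR_gradDotR hf hg, sum_mul, ← sum_add_distrib]
  rw [sum_comm]
  exact sum_congr rfl fun i _ => sum_congr rfl fun j _ => by ring

theorem hessR_comm (hf : ContDiff ℝ 2 f) : hessR N f g h x = hessR N f h g x := by
  rw [hessR, hessR, sum_comm]
  exact sum_congr rfl fun i _ => sum_congr rfl fun j _ => by rw [pdR_pdR_comm hf]; ring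

theorem divR_add {F G : EuclideanSpace ℝ (Fin N) → Fin N → ℝ} (hF : DifferentiableAt ℝ F x)
    (hG : DifferentiableAt ℝ G x) :
    divR N (fun y i => F y i + G y i) x = divR N F x + divR N G x := by
  simp only [divR, ← sum_add_distrib]
  exact sum_congr rfl fun i _ =>
    pdR_add (differentiableAt_pi.1 hF i) (differentiableAt_pi.1 hG i) i

theorem divR_sub {F G : EuclideanSpace ℝ (Fin N) → Fin N → ℝ} (hF : DifferentiableAt ℝ F x)
    (hG : DifferentiableAt ℝ G x) :
    divR N (fun y i => F y i - G y i) x = divR N F x - divR N G x := by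
  simp only [divR, ← sum_sub_distrib]
  exact sum_congr rfl fun i _ =>
    pdR_sub (differentiableAt_pi.1 hF i) (differentiableAt_pi.1 hG i) i

theorem divR_const_mul {F : EuclideanSpace ℝ (Fin N) → Fin N → ℝ} (hF : DifferentiableAt ℝ F x)
    (c : ℝ) : divR N (fun y i => c * F y i) x = c * divR N F x := by
  simp only [divR, mul_sum]
  exact sum_congr rfl fun i _ => pdR_const_mul (differentiableAt_pi.1 hF i) c i

theorem divR_mul_grad (hf : DifferentiableAt ℝ f x)
    (hg : ∀ i, DifferentiableAt ℝ (pdR N g i) x) :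
    divR N (fun y i => f y * pdR N g i y) x = gradDotR N f g x + f x * lapR N g x := by
  simp only [divR, gradDotR, lapR, mul_sum, ← sum_add_distrib]
  exact sum_congr rfl fun i _ => pdR_mul hf (hg i) i

theorem divR_coord : divR N (fun y i => y i) x = N := by
  simp [divR, pdR_coord]

theorem divR_single (j : Fin N) : divR N (fun y => Pi.single j (f y)) x = pdR N f j x := by
  rw [divR, sum_eq_single j]
  · simp
  · intro i _ hij
    simp [hij, pdR]
  · simp

theorem divR_single_sub_single (hf : DifferentiableAt ℝ f x) (hg : DifferentiableAt ℝ g x)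
    (j k : Fin N) :
    divR N (fun y => Pi.single j (f y) - Pi.single k (g y)) x = pdR N f j x - pdR N g k x := by
  have hsingle : ∀ {φ : EuclideanSpace ℝ (Fin N) → ℝ} (l : Fin N), DifferentiableAt ℝ φ x →
      DifferentiableAt ℝ (fun y => Pi.single (M := fun _ => ℝ) l (φ y)) x :=
    fun l hφ => (ContinuousLinearMap.single ℝ (fun _ : Fin N => ℝ) l).differentiableAt.comp x hφ
  exact (divR_sub (hsingle j hf) (hsingle k hg)).trans (by rw [divR_single, divR_single])

theorem continuous_divR {F : EuclideanSpace ℝ (Fin N) → Fin N → ℝ} (hF : ContDiff ℝ 1 F) :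
    Continuous (divR N F) :=
  continuous_finsetSum _ fun i _ =>
    (contDiff_pdR (contDiff_pi.1 hF i) (zero_add _).le i).continuous

end VectorCalculus

section CarlemanFlux

variable {b φ v : EuclideanSpace ℝ (Fin N) → ℝ}

theorem differentiable_gradDotR {f g : EuclideanSpace ℝ (Fin N) → ℝ}
    (hf : ∀ i, Differentiable ℝ (pdR N f i)) (hg : ∀ i, Differentiable ℝ (pdR N g i)) :
    Differentiable ℝ (gradDotR N f g) := by
  unfold gradDotR
  fun_prop

noncomputable def carlemanFlux (N : ℕ) (b φ v : EuclideanSpace ℝ (Fin N) → ℝ)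
    (y : EuclideanSpace ℝ (Fin N)) (i : Fin N) : ℝ :=
  2 * b y * gradDotR N φ v y * pdR N v i y - b y * gradDotR N v v y * pdR N φ i y

theorem divR_carlemanFlux (hb : ContDiff ℝ 1 b) (hφ : ContDiff ℝ 2 φ) (hv : ContDiff ℝ 2 v)
    (x : EuclideanSpace ℝ (Fin N)) :
    divR N (carlemanFlux N b φ v) x
      = 2 * gradDotR N b v x * gradDotR N φ v x + 2 * b x * hessR N φ v v x
        + 2 * b x * gradDotR N φ v x * lapR N v x
        - gradDotR N b φ x * gradDotR N v v x - b x * lapR N φ x * gradDotR N v v x := by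
  have hb' : Differentiable ℝ b := hb.differentiable one_ne_zero
  have hφ' : ∀ i, Differentiable ℝ (pdR N φ i) := fun i =>
    (contDiff_pdR (m := 1) hφ (by norm_num) i).differentiable one_ne_zero
  have hv' : ∀ i, Differentiable ℝ (pdR N v i) := fun i =>
    (contDiff_pdR (m := 1) hv (by norm_num) i).differentiable one_ne_zero
  have hφv := differentiable_gradDotR hφ' hv'
  have hvv := differentiable_gradDotR hv' hv'
  have hF : Differentiable ℝ fun y i => 2 * b y * gradDotR N φ v y * pdR N v i y := by
    fun_prop
  have hG : Differentiable ℝ fun y i => b y * gradDotR N v v y * pdR N φ i y := by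
    fun_prop
  have hdivF : divR N (carlemanFlux N b φ v) x
      = divR N (fun y i => 2 * b y * gradDotR N φ v y * pdR N v i y) x
        - divR N (fun y i => b y * gradDotR N v v y * pdR N φ i y) x :=
    divR_sub (hF x) (hG x)
  rw [hdivF, divR_mul_grad (by fun_prop) (fun i => hv' i x),
    divR_mul_grad (by fun_prop) (fun i => hφ' i x),
    gradDotR_mul (by fun_prop) (hφv x), gradDotR_mul (hb' x) (hvv x),
    gradDotR_const_mul (hb' x),
    gradDotR_gradDotR (fun i => hφ' i x) (fun i => hv' i x),
    gradDotR_gradDotR (fun i => hv' i x) (fun i => hv' i x), hessR_comm (g := φ) hv]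
  ring

end CarlemanFlux

section GaussGreen

/-- The divergence theorem for `C¹` fields on `Ω`; `ν` plays the outward unit normal and `μ` the
surface measure of `∂Ω`. -/
def HasGaussGreen (N : ℕ) (Ω : Set (EuclideanSpace ℝ (Fin N)))
    (ν : EuclideanSpace ℝ (Fin N) → EuclideanSpace ℝ (Fin N))
    (μ : Measure (EuclideanSpace ℝ (Fin N))) : Prop :=
  ∀ F : EuclideanSpace ℝ (Fin N) → (Fin N → ℝ), ContDiff ℝ 1 F →
    ∫ x in Ω, divR N F x = ∫ x in frontier Ω, ∑ i : Fin N, ν x i * F x i ∂μ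

variable {Ω : Set (EuclideanSpace ℝ (Fin N))}
  {ν : EuclideanSpace ℝ (Fin N) → EuclideanSpace ℝ (Fin N)}
  {μ : Measure (EuclideanSpace ℝ (Fin N))} {v : EuclideanSpace ℝ (Fin N) → ℝ}

theorem contDiff_coord : ContDiff ℝ 1 fun (y : EuclideanSpace ℝ (Fin N)) (i : Fin N) => y i :=
  contDiff_pi.2 fun i => (EuclideanSpace.proj (𝕜 := ℝ) i).contDiff

/-- The flux of every `C¹` field is integrable: otherwise its boundary integral would be the junk
value `0`, and adding the position field, whose divergence `N` has nonzero integral, breaks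
additivity. -/
theorem HasGaussGreen.integrableOn_flux (hdiv : HasGaussGreen N Ω ν μ) (hΩo : IsOpen Ω)
    (hΩb : Bornology.IsBounded Ω) (hne : Ω.Nonempty) (hN : N ≠ 0)
    {F : EuclideanSpace ℝ (Fin N) → Fin N → ℝ} (hF : ContDiff ℝ 1 F) :
    IntegrableOn (fun x => ∑ i : Fin N, ν x i * F x i) (frontier Ω) μ := by
  set X : EuclideanSpace ℝ (Fin N) → Fin N → ℝ := fun y i => y i
  have hX : ContDiff ℝ 1 X := contDiff_coord
  have hvol : ∫ x in Ω, divR N X x ≠ 0 := by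
    have hpos : 0 < volume.real Ω :=
      ENNReal.toReal_pos (hΩo.measure_pos volume hne).ne' hΩb.measure_lt_top.ne
    simp only [X, divR_coord, setIntegral_const, smul_eq_mul]
    positivity
  have hXint : IntegrableOn (fun x => ∑ i : Fin N, ν x i * X x i) (frontier Ω) μ := by
    by_contra h
    exact hvol ((hdiv X hX).trans (integral_undef h))
  by_contra hFint
  have hFXint : ¬ IntegrableOn (fun x => ∑ i : Fin N, ν x i * (F x i + X x i)) (frontier Ω) μ :=
    fun h => hFint <| (h.sub hXint).congr_fun (fun x _ => by simp [mul_add, sum_add_distrib])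
      isClosed_frontier.measurableSet
  have hF0 := (hdiv F hF).trans (integral_undef hFint)
  have hFX0 := (hdiv (fun y i => F y i + X y i) (hF.add hX)).trans (integral_undef hFXint)
  have hdF := continuous_divR hF
  have hdX := continuous_divR hX
  simp only [divR_add ((hF.differentiable one_ne_zero) _) ((hX.differentiable one_ne_zero) _)]
    at hFX0
  rw [integral_add (hdF.integrableOn_of_isBounded hΩb) (hdX.integrableOn_of_isBounded hΩb),
    hF0, zero_add] at hFX0
  exact hvol hFX0

theorem sum_mul_single_sub_single (c : Fin N → ℝ) (j k : Fin N) (a b : ℝ) :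
    ∑ i : Fin N, c i * (Pi.single j a - Pi.single k b : Fin N → ℝ) i = c j * a - c k * b := by
  simp [mul_sub, sum_sub_distrib, Pi.single_apply]

theorem ContDiff.single_sub_single {n : WithTop ℕ∞} {f g : EuclideanSpace ℝ (Fin N) → ℝ}
    (hf : ContDiff ℝ n f) (hg : ContDiff ℝ n g) (j k : Fin N) :
    ContDiff ℝ n fun y => (Pi.single j (f y) - Pi.single k (g y) : Fin N → ℝ) :=
  ((ContinuousLinearMap.single ℝ (fun _ : Fin N => ℝ) j).contDiff.comp hf).sub
    ((ContinuousLinearMap.single ℝ (fun _ : Fin N => ℝ) k).contDiff.comp hg)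

/-- The fields `g (∂_k v e_j - ∂_j v e_k)` and `v (∂_j g e_k - ∂_k g e_j)` have the same
divergence, and the flux of the second vanishes on `∂Ω`. -/
theorem HasGaussGreen.setIntegral_mul_tangentialDeriv_eq_zero (hdiv : HasGaussGreen N Ω ν μ)
    (hv : ContDiff ℝ 2 v) (hv0 : ∀ x ∈ frontier Ω, v x = 0) {g : EuclideanSpace ℝ (Fin N) → ℝ}
    (hg : ContDiff ℝ 2 g) (j k : Fin N) :
    ∫ x in frontier Ω, g x * (ν x j * pdR N v k x - ν x k * pdR N v j x) ∂μ = 0 := by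
  have hv' : ∀ i, ContDiff ℝ 1 (pdR N v i) := fun i => contDiff_pdR hv (by norm_num) i
  have hg' : ∀ i, ContDiff ℝ 1 (pdR N g i) := fun i => contDiff_pdR hg (by norm_num) i
  have hv1 : ContDiff ℝ 1 v := hv.of_le one_le_two
  have hg1 : ContDiff ℝ 1 g := hg.of_le one_le_two
  set P := fun y => (Pi.single j (g y * pdR N v k y) - Pi.single k (g y * pdR N v j y) :
    Fin N → ℝ)
  set Q := fun y => (Pi.single k (v y * pdR N g j y) - Pi.single j (v y * pdR N g k y) :
    Fin N → ℝ)
  have hP : ContDiff ℝ 1 P := (hg1.mul (hv' k)).single_sub_single (hg1.mul (hv' j)) j k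
  have hQ : ContDiff ℝ 1 Q := (hv1.mul (hg' j)).single_sub_single (hv1.mul (hg' k)) k j
  have hdivPQ : ∀ x, divR N P x = divR N Q x := by
    intro x
    have d : ∀ {f : EuclideanSpace ℝ (Fin N) → ℝ}, ContDiff ℝ 1 f → DifferentiableAt ℝ f x :=
      fun hf => hf.differentiable one_ne_zero x
    rw [divR_single_sub_single (d (hg1.mul (hv' k))) (d (hg1.mul (hv' j))),
      divR_single_sub_single (d (hv1.mul (hg' j))) (d (hv1.mul (hg' k))),
      pdR_mul (d hg1) (d (hv' k)), pdR_mul (d hg1) (d (hv' j)), pdR_mul (d hv1) (d (hg' j)),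
      pdR_mul (d hv1) (d (hg' k)), pdR_pdR_comm hv k j, pdR_pdR_comm hg k j]
    ring
  calc ∫ x in frontier Ω, g x * (ν x j * pdR N v k x - ν x k * pdR N v j x) ∂μ
      = ∫ x in frontier Ω, ∑ i : Fin N, ν x i * P x i ∂μ := by
        refine integral_congr_ae (Filter.Eventually.of_forall fun x => ?_)
        simp only [P, sum_mul_single_sub_single]
        ring
    _ = ∫ x in frontier Ω, ∑ i : Fin N, ν x i * Q x i ∂μ := by
        rw [← hdiv P hP, ← hdiv Q hQ, funext hdivPQ]
    _ = 0 := setIntegral_eq_zero_of_forall_eq_zero fun x hx => by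
        simp [Q, hv0 x hx]

theorem HasGaussGreen.ae_normal_mul_pdR_comm (hdiv : HasGaussGreen N Ω ν μ) (hΩo : IsOpen Ω)
    (hΩb : Bornology.IsBounded Ω) (hv : ContDiff ℝ 2 v) (hv0 : ∀ x ∈ frontier Ω, v x = 0)
    (j k : Fin N) :
    ∀ᵐ x ∂μ.restrict (frontier Ω), ν x j * pdR N v k x = ν x k * pdR N v j x := by
  rcases Ω.eq_empty_or_nonempty with rfl | hne
  · simp
  have hv' : ∀ i, ContDiff ℝ 1 (pdR N v i) := fun i => contDiff_pdR hv (by norm_num) i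
  have hzero :
      ∀ᵐ x ∂μ.restrict (frontier Ω), ν x j * pdR N v k x - ν x k * pdR N v j x = 0 := by
    refine ae_eq_zero_of_integral_contDiff_smul_eq_zero ?_ fun g hg _ => ?_
    · have hint := hdiv.integrableOn_flux hΩo hΩb hne j.pos.ne'
        ((hv' k).single_sub_single (hv' j) j k)
      exact (hint.congr_fun (fun x _ => sum_mul_single_sub_single _ _ _ _ _)
        isClosed_frontier.measurableSet).locallyIntegrable
    · exact hdiv.setIntegral_mul_tangentialDeriv_eq_zero hv hv0
        (hg.of_le (WithTop.coe_le_coe.2 le_top)) j k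
  filter_upwards [hzero] with x hx using sub_eq_zero.1 hx

end GaussGreen

section Boundary

variable {b φ v : EuclideanSpace ℝ (Fin N) → ℝ} {x : EuclideanSpace ℝ (Fin N)}

theorem sum_mul_carlemanFlux_of_parallel (n : EuclideanSpace ℝ (Fin N)) (hn : ‖n‖ = 1)
    (hpar : ∀ j k, n j * pdR N v k x = n k * pdR N v j x) :
    ∑ j : Fin N, n j * carlemanFlux N b φ v x j
      = b x * (∑ i : Fin N, n i * pdR N φ i x) * (∑ i : Fin N, n i * pdR N v i x) ^ 2 := by
  have hn2 : ∑ i : Fin N, n i ^ 2 = 1 := by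
    rw [← EuclideanSpace.real_norm_sq_eq, hn, one_pow]
  set d := ∑ i : Fin N, n i * pdR N v i x
  set p := ∑ i : Fin N, n i * pdR N φ i x
  have hV : ∀ k, pdR N v k x = d * n k := fun k => calc
    pdR N v k x = ∑ i : Fin N, n i ^ 2 * pdR N v k x := by rw [← sum_mul, hn2, one_mul]
    _ = ∑ i : Fin N, n i * pdR N v i x * n k :=
        sum_congr rfl fun i _ => by rw [sq, mul_assoc, hpar i k]; ring
    _ = d * n k := (sum_mul ..).symm
  have hφv : gradDotR N φ v x = d * p := by
    simp only [gradDotR, hV, p, mul_sum]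
    exact sum_congr rfl fun i _ => by ring
  have hvv : gradDotR N v v x = d ^ 2 := by
    rw [← mul_one (d ^ 2), ← hn2, mul_sum]
    simp only [gradDotR, hV]
    exact sum_congr rfl fun i _ => by ring
  have hterm : ∀ j, n j * carlemanFlux N b φ v x j
      = 2 * b x * d ^ 2 * p * n j ^ 2 - b x * d ^ 2 * (n j * pdR N φ j x) := fun j => by
    rw [carlemanFlux, hφv, hvv, hV]
    ring
  rw [sum_congr rfl fun j _ => hterm j, sum_sub_distrib, ← mul_sum, ← mul_sum, hn2]
  ring

end Boundary

section RealImaginaryParts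

open Complex

variable {u : EuclideanSpace ℝ (Fin N) → ℂ} {x : EuclideanSpace ℝ (Fin N)}

theorem pdC_eq_re_add_im (hu : DifferentiableAt ℝ u x) (i : Fin N) :
    pdC N u i x = pdR N (fun y => (u y).re) i x + pdR N (fun y => (u y).im) i x * I := by
  apply Complex.ext <;> simp [re_pdC hu, im_pdC hu]

theorem gradDotC_eq_re_add_im (hu : DifferentiableAt ℝ u x)
    (φ : EuclideanSpace ℝ (Fin N) → ℝ) :
    gradDotC N φ u x
      = gradDotR N φ (fun y => (u y).re) x + gradDotR N φ (fun y => (u y).im) x * I := by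
  simp only [gradDotC, gradDotR, pdC_eq_re_add_im hu]
  push_cast
  simp only [sum_mul, ← sum_add_distrib]
  exact sum_congr rfl fun i _ => by ring

theorem lapC_eq_re_add_im (hu : ContDiff ℝ 2 u) :
    lapC N u x = lapR N (fun y => (u y).re) x + lapR N (fun y => (u y).im) x * I := by
  have hu' : ∀ i, Differentiable ℝ (pdC N u i) := fun i =>
    (contDiff_pdC (m := 1) hu (by norm_num) i).differentiable one_ne_zero
  have hd : Differentiable ℝ u := hu.differentiable two_ne_zero
  have hre : ∀ i, pdR N (fun y => (u y).re) i = fun y => (pdC N u i y).re := fun i =>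
    funext fun y => (re_pdC (hd y) i).symm
  have him : ∀ i, pdR N (fun y => (u y).im) i = fun y => (pdC N u i y).im := fun i =>
    funext fun y => (im_pdC (hd y) i).symm
  simp only [lapC, lapR, hre, him, pdC_eq_re_add_im (hu' _ x)]
  push_cast
  simp only [sum_mul, ← sum_add_distrib]

theorem gradNormSqC_eq_gradDotR_add_gradDotR (hu : DifferentiableAt ℝ u x) :
    gradNormSqC N u x
      = gradDotR N (fun y => (u y).re) (fun y => (u y).re) x
        + gradDotR N (fun y => (u y).im) (fun y => (u y).im) x := by
  simp only [gradNormSqC, gradDotR, ← sum_add_distrib, Complex.sq_norm, normSq_apply, re_pdC hu,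
    im_pdC hu]

theorem sum_ofReal_mul_conj_pdC (f : EuclideanSpace ℝ (Fin N) → ℝ) :
    ∑ i : Fin N, (pdR N f i x : ℂ) * (starRingEnd ℂ) (pdC N u i x)
      = (starRingEnd ℂ) (gradDotC N f u x) := by
  simp [gradDotC, map_sum]

theorem re_sum_hessian_pdC_mul_conj (hu : DifferentiableAt ℝ u x)
    (φ : EuclideanSpace ℝ (Fin N) → ℝ) :
    (∑ i : Fin N, ∑ j : Fin N,
        (pdR N (pdR N φ i) j x : ℂ) * pdC N u i x * (starRingEnd ℂ) (pdC N u j x)).re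
      = hessR N φ (fun y => (u y).re) (fun y => (u y).re) x
        + hessR N φ (fun y => (u y).im) (fun y => (u y).im) x := by
  simp only [hessR, re_sum, ← sum_add_distrib, mul_re, mul_im, ofReal_re, ofReal_im, conj_re,
    conj_im, re_pdC hu, im_pdC hu]
  exact sum_congr rfl fun i _ => sum_congr rfl fun j _ => by ring

theorem sq_norm_sum_ofReal_mul_pdC (hu : DifferentiableAt ℝ u x) (n : Fin N → ℝ) :
    ‖∑ i : Fin N, (n i : ℂ) * pdC N u i x‖ ^ 2
      = (∑ i : Fin N, n i * pdR N (fun y => (u y).re) i x) ^ 2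
        + (∑ i : Fin N, n i * pdR N (fun y => (u y).im) i x) ^ 2 := by
  rw [Complex.sq_norm, normSq_apply]
  simp only [re_sum, im_sum, re_ofReal_mul, im_ofReal_mul, re_pdC hu, im_pdC hu, sq]

end RealImaginaryParts

section Carleman

open Complex

variable {b φ : EuclideanSpace ℝ (Fin N) → ℝ} {u : EuclideanSpace ℝ (Fin N) → ℂ}

theorem contDiff_carlemanFlux {v : EuclideanSpace ℝ (Fin N) → ℝ} (hb : ContDiff ℝ 1 b)
    (hφ : ContDiff ℝ 2 φ) (hv : ContDiff ℝ 2 v) : ContDiff ℝ 1 (carlemanFlux N b φ v) := by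
  have hφ' : ∀ i, ContDiff ℝ 1 (pdR N φ i) := fun i => contDiff_pdR hφ (by norm_num) i
  have hv' : ∀ i, ContDiff ℝ 1 (pdR N v i) := fun i => contDiff_pdR hv (by norm_num) i
  unfold carlemanFlux gradDotR
  fun_prop

theorem re_carlemanIntegrands_eq_divR (hu : ContDiff ℝ 2 u) (hφ : ContDiff ℝ 2 φ)
    (hb : ContDiff ℝ 1 b) (s : ℝ) (x : EuclideanSpace ℝ (Fin N)) :
    (2 * (s : ℂ) * (b x : ℂ) * gradDotC N φ u x * (starRingEnd ℂ) (lapC N u x)).re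
      + (2 * (s : ℂ) * (∑ i : Fin N, (pdR N b i x : ℂ) * (starRingEnd ℂ) (pdC N u i x))
          * gradDotC N φ u x).re
      - s * gradDotR N b φ x * gradNormSqC N u x - s * b x * lapR N φ x * gradNormSqC N u x
      + (2 * (s : ℂ) * (b x : ℂ) * ∑ i : Fin N, ∑ j : Fin N,
          (pdR N (pdR N φ i) j x : ℂ) * pdC N u i x * (starRingEnd ℂ) (pdC N u j x)).re
      = divR N (fun y i => s * (carlemanFlux N b φ (fun y => (u y).re) y i
          + carlemanFlux N b φ (fun y => (u y).im) y i)) x := by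
  have hd : DifferentiableAt ℝ u x := hu.differentiable two_ne_zero x
  have hv : ContDiff ℝ 2 fun y => (u y).re := reCLM.contDiff.comp hu
  have hw : ContDiff ℝ 2 fun y => (u y).im := imCLM.contDiff.comp hu
  have hFv := (contDiff_carlemanFlux hb hφ hv).differentiable one_ne_zero x
  have hFw := (contDiff_carlemanFlux hb hφ hw).differentiable one_ne_zero x
  rw [divR_const_mul (F := fun y i => carlemanFlux N b φ (fun y => (u y).re) y i
      + carlemanFlux N b φ (fun y => (u y).im) y i) (hFv.add hFw), divR_add hFv hFw,
    divR_carlemanFlux hb hφ hv, divR_carlemanFlux hb hφ hw, sum_ofReal_mul_conj_pdC,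
    gradDotC_eq_re_add_im hd, gradDotC_eq_re_add_im hd, lapC_eq_re_add_im hu,
    gradNormSqC_eq_gradDotR_add_gradDotR hd]
  simp only [mul_re, mul_im, ofReal_re, ofReal_im, re_ofNat, im_ofNat, conj_re, conj_im, add_re,
    add_im, I_re, I_im, re_sum_hessian_pdC_mul_conj hd]
  ring

theorem re_setIntegral_carlemanIntegrands_eq {Ω : Set (EuclideanSpace ℝ (Fin N))}
    (hΩb : Bornology.IsBounded Ω) (hu : ContDiff ℝ 2 u) (hφ : ContDiff ℝ 2 φ)
    (hb : ContDiff ℝ 1 b) (s : ℝ) :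
    (∫ x in Ω, 2 * (s : ℂ) * (b x : ℂ) * gradDotC N φ u x * (starRingEnd ℂ) (lapC N u x)).re
      + (∫ x in Ω, 2 * (s : ℂ)
          * (∑ i : Fin N, (pdR N b i x : ℂ) * (starRingEnd ℂ) (pdC N u i x))
          * gradDotC N φ u x).re
      - (∫ x in Ω, s * gradDotR N b φ x * gradNormSqC N u x)
      - (∫ x in Ω, s * b x * lapR N φ x * gradNormSqC N u x)
      + (∫ x in Ω, 2 * (s : ℂ) * (b x : ℂ) * ∑ i : Fin N, ∑ j : Fin N,
          (pdR N (pdR N φ i) j x : ℂ) * pdC N u i x * (starRingEnd ℂ) (pdC N u j x)).re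
      = ∫ x in Ω, divR N (fun y i => s * (carlemanFlux N b φ (fun y => (u y).re) y i
          + carlemanFlux N b φ (fun y => (u y).im) y i)) x := by
  have cb : Continuous b := hb.continuous
  have cb' : ∀ i, Continuous (pdR N b i) :=
    fun i => (contDiff_pdR (m := 0) hb (zero_add _).le i).continuous
  have cφ' : ∀ i, Continuous (pdR N φ i) :=
    fun i => (contDiff_pdR (m := 0) hφ (by norm_num) i).continuous
  have cφ'' : ∀ i j, Continuous (pdR N (pdR N φ i) j) := fun i j =>
    (contDiff_pdR (contDiff_pdR (m := 1) hφ (by norm_num) i) (zero_add _).le j).continuous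
  have cu' : ∀ i, Continuous (pdC N u i) :=
    fun i => (contDiff_pdC (m := 0) hu (by norm_num) i).continuous
  have cu'' : ∀ i j, Continuous (pdC N (pdC N u i) j) := fun i j =>
    (contDiff_pdC (contDiff_pdC (m := 1) hu (by norm_num) i) (zero_add _).le j).continuous
  have hre : ∀ f : EuclideanSpace ℝ (Fin N) → ℂ, Continuous f →
      (∫ x in Ω, f x).re = ∫ x in Ω, (f x).re :=
    fun f hf => (integral_re (hf.integrableOn_of_isBounded hΩb)).symm
  have hint : ∀ f : EuclideanSpace ℝ (Fin N) → ℝ, Continuous f → IntegrableOn f Ω :=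
    fun f hf => hf.integrableOn_of_isBounded hΩb
  simp_rw [← re_carlemanIntegrands_eq_divR hu hφ hb s]
  rw [integral_add (hint _ ?_) (hint _ ?_), integral_sub (hint _ ?_) (hint _ ?_),
    integral_sub (hint _ ?_) (hint _ ?_), integral_add (hint _ ?_) (hint _ ?_),
    hre _ ?_, hre _ ?_, hre _ ?_]
  all_goals
    try simp only [gradDotC, lapC, gradDotR, gradNormSqC, lapR]
    fun_prop

theorem HasGaussGreen.re_setIntegral_gradDotC_mul_conj_lapC
    {Ω : Set (EuclideanSpace ℝ (Fin N))} {ν : EuclideanSpace ℝ (Fin N) → EuclideanSpace ℝ (Fin N)}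
    {μ : Measure (EuclideanSpace ℝ (Fin N))} (hdiv : HasGaussGreen N Ω ν μ) (hΩo : IsOpen Ω)
    (hΩb : Bornology.IsBounded Ω) (hν : ∀ x ∈ frontier Ω, ‖ν x‖ = 1) (hu : ContDiff ℝ 2 u)
    (hu0 : ∀ x ∈ frontier Ω, u x = 0) (hφ : ContDiff ℝ 2 φ) (hb : ContDiff ℝ 1 b) (s : ℝ) :
    (∫ x in Ω, 2 * (s : ℂ) * (b x : ℂ) * gradDotC N φ u x * (starRingEnd ℂ) (lapC N u x)).re
      = (∫ x in frontier Ω, s * b x * (∑ i : Fin N, ν x i * pdR N φ i x)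
            * ‖∑ i : Fin N, (ν x i : ℂ) * pdC N u i x‖ ^ 2 ∂μ)
        - (∫ x in Ω, 2 * (s : ℂ)
            * (∑ i : Fin N, (pdR N b i x : ℂ) * (starRingEnd ℂ) (pdC N u i x))
            * gradDotC N φ u x).re
        + (∫ x in Ω, s * gradDotR N b φ x * gradNormSqC N u x)
        + (∫ x in Ω, s * b x * lapR N φ x * gradNormSqC N u x)
        - (∫ x in Ω, 2 * (s : ℂ) * (b x : ℂ) * ∑ i : Fin N, ∑ j : Fin N,
            (pdR N (pdR N φ i) j x : ℂ) * pdC N u i x * (starRingEnd ℂ) (pdC N u j x)).re := by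
  set v := fun y => (u y).re
  set w := fun y => (u y).im
  have hv : ContDiff ℝ 2 v := reCLM.contDiff.comp hu
  have hw : ContDiff ℝ 2 w := imCLM.contDiff.comp hu
  have hG : ContDiff ℝ 1 fun y i => s * (carlemanFlux N b φ v y i + carlemanFlux N b φ w y i) :=
    ((contDiff_carlemanFlux hb hφ hv).add (contDiff_carlemanFlux hb hφ hw)).const_smul s
  have hparallel : ∀ f : EuclideanSpace ℝ (Fin N) → ℝ, ContDiff ℝ 2 f →
      (∀ x ∈ frontier Ω, f x = 0) →
      ∀ᵐ x ∂μ.restrict (frontier Ω), ∀ j k, ν x j * pdR N f k x = ν x k * pdR N f j x :=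
    fun f hf hf0 => ae_all_iff.2 fun j => ae_all_iff.2 fun k =>
      hdiv.ae_normal_mul_pdR_comm hΩo hΩb hf hf0 j k
  have hboundary : ∫ x in frontier Ω, ∑ i : Fin N, ν x i
        * (s * (carlemanFlux N b φ v x i + carlemanFlux N b φ w x i)) ∂μ
      = ∫ x in frontier Ω, s * b x * (∑ i : Fin N, ν x i * pdR N φ i x)
          * ‖∑ i : Fin N, (ν x i : ℂ) * pdC N u i x‖ ^ 2 ∂μ := by
    refine integral_congr_ae ?_
    filter_upwards [ae_restrict_mem isClosed_frontier.measurableSet,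
      hparallel v hv fun x hx => by simp [v, hu0 x hx],
      hparallel w hw fun x hx => by simp [w, hu0 x hx]] with x hx hv' hw'
    simp only [mul_add, mul_left_comm _ s, ← mul_sum, sum_add_distrib]
    rw [sum_mul_carlemanFlux_of_parallel _ (hν x hx) hv',
      sum_mul_carlemanFlux_of_parallel _ (hν x hx) hw',
      sq_norm_sum_ofReal_mul_pdC (hu.differentiable two_ne_zero x)]
    ring
  have hinterior := re_setIntegral_carlemanIntegrands_eq hΩb hu hφ hb s
  rw [hdiv _ hG, hboundary] at hinterior
  linarith

end Carleman

theorem stmt_16_general (N : ℕ) (Ω : Set (EuclideanSpace ℝ (Fin N)))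
    (hΩo : IsOpen Ω) (hΩb : Bornology.IsBounded Ω)
    (ν : EuclideanSpace ℝ (Fin N) → EuclideanSpace ℝ (Fin N))
    (hν : ∀ x ∈ frontier Ω, ‖ν x‖ = 1)
    -- `ν` is the outward unit normal of the smooth boundary: the divergence theorem holds.
    (hdiv : ∀ F : EuclideanSpace ℝ (Fin N) → (Fin N → ℝ), ContDiff ℝ 1 F →
      ∫ x in Ω, ∑ i : Fin N, pdR N (fun y => F y i) i x
        = ∫ x in frontier Ω, ∑ i : Fin N, ν x i * F x i ∂(μH[((N : ℝ) - 1)]))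
    (u : EuclideanSpace ℝ (Fin N) → ℂ) (hu : ContDiff ℝ 2 u)
    (hu0 : ∀ x ∈ frontier Ω, u x = 0)
    (φ : EuclideanSpace ℝ (Fin N) → ℝ) (hφ : ContDiff ℝ 2 φ)
    (σ : EuclideanSpace ℝ (Fin N) → ℝ) (hσ : ContDiff ℝ 1 σ) (s : ℝ) :
    (∫ x in Ω, 2 * (s : ℂ) * ((σ x : ℝ) : ℂ) ^ 2 * gradDotC N φ u x
        * (starRingEnd ℂ) (lapC N u x)).re
      = (∫ x in frontier Ω, s * σ x ^ 2 * (∑ i : Fin N, ν x i * pdR N φ i x)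
            * ‖∑ i : Fin N, (ν x i : ℂ) * pdC N u i x‖ ^ 2 ∂(μH[((N : ℝ) - 1)]))
        - (∫ x in Ω, 2 * (s : ℂ)
            * (∑ i : Fin N, (pdR N (fun y => σ y ^ 2) i x : ℂ) * (starRingEnd ℂ) (pdC N u i x))
            * gradDotC N φ u x).re
        + (∫ x in Ω, s * (∑ i : Fin N, pdR N (fun y => σ y ^ 2) i x * pdR N φ i x)
            * gradNormSqC N u x)
        + (∫ x in Ω, s * σ x ^ 2 * lapR N φ x * gradNormSqC N u x)
        - (∫ x in Ω, 2 * (s : ℂ) * ((σ x : ℝ) : ℂ) ^ 2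
            * ∑ i : Fin N, ∑ j : Fin N,
                (pdR N (pdR N φ i) j x : ℂ) * pdC N u i x * (starRingEnd ℂ) (pdC N u j x)).re := by
  have h := HasGaussGreen.re_setIntegral_gradDotC_mul_conj_lapC hdiv hΩo hΩb hν hu hu0 hφ
    (hσ.pow 2) s
  push_cast at h
  exact h

theorem stmt_16 (N : ℕ) (Ω : Set (EuclideanSpace ℝ (Fin N)))
    (hΩo : IsOpen Ω) (hΩb : Bornology.IsBounded Ω)
    (ν : EuclideanSpace ℝ (Fin N) → EuclideanSpace ℝ (Fin N))
    (hν : ∀ x ∈ frontier Ω, ‖ν x‖ = 1)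
    (hfin : μH[((N : ℝ) - 1)] (frontier Ω) < ⊤)
    -- `ν` is the outward unit normal of the smooth boundary: the divergence theorem holds.
    (hdiv : ∀ F : EuclideanSpace ℝ (Fin N) → (Fin N → ℝ), ContDiff ℝ 1 F →
      ∫ x in Ω, ∑ i : Fin N, pdR N (fun y => F y i) i x
        = ∫ x in frontier Ω, ∑ i : Fin N, ν x i * F x i ∂(μH[((N : ℝ) - 1)]))
    (u : EuclideanSpace ℝ (Fin N) → ℂ) (hu : ContDiff ℝ 2 u)
    (hu0 : ∀ x ∈ frontier Ω, u x = 0)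
    (φ : EuclideanSpace ℝ (Fin N) → ℝ) (hφ : ContDiff ℝ 2 φ)
    (σ : EuclideanSpace ℝ (Fin N) → ℝ) (hσ : ContDiff ℝ 1 σ) (s : ℝ) :
    (∫ x in Ω, 2 * (s : ℂ) * ((σ x : ℝ) : ℂ) ^ 2 * gradDotC N φ u x
        * (starRingEnd ℂ) (lapC N u x)).re
      = (∫ x in frontier Ω, s * σ x ^ 2 * (∑ i : Fin N, ν x i * pdR N φ i x)
            * ‖∑ i : Fin N, (ν x i : ℂ) * pdC N u i x‖ ^ 2 ∂(μH[((N : ℝ) - 1)]))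
        - (∫ x in Ω, 2 * (s : ℂ)
            * (∑ i : Fin N, (pdR N (fun y => σ y ^ 2) i x : ℂ) * (starRingEnd ℂ) (pdC N u i x))
            * gradDotC N φ u x).re
        + (∫ x in Ω, s * (∑ i : Fin N, pdR N (fun y => σ y ^ 2) i x * pdR N φ i x)
            * gradNormSqC N u x)
        + (∫ x in Ω, s * σ x ^ 2 * lapR N φ x * gradNormSqC N u x)
        - (∫ x in Ω, 2 * (s : ℂ) * ((σ x : ℝ) : ℂ) ^ 2
            * ∑ i : Fin N, ∑ j : Fin N,
                (pdR N (pdR N φ i) j x : ℂ) * pdC N u i x * (starRingEnd ℂ) (pdC N u j x)).re :=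
  stmt_16_general N Ω hΩo hΩb ν hν hdiv u hu hu0 φ hφ σ hσ s
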